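/- arXiv:1610.05159 — 3 statements merged into one kernel-verified Lean document; each statement's English description precedes it below -/
import Mathlib

section
/- Let n be a positive integer, Γ a group, and ρ : Γ → SL_n(ℂ) an irreducible representation such that tr(ρ(g)) = conj(tr(ρ(g⁻¹))) for all g ∈ Γ. Then there exist natural numbers p, q with p + q = n and an invertible matrix Q ∈ GL_n(ℂ) such that for all g ∈ Γ, the matrix ρ'(g) = Q ρ(g) Q⁻¹ satisfies ρ'(g)ᴴ I_{p,q} ρ'(g) = I_{p,q}; that is, ρ is conjugate to a representation taking values in SU(p,q). -/
open Matrix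

/-- A representation `ρ : Γ →* SL_n(ℂ)` is irreducible if the only invariant subspaces
of `ℂⁿ` are `0` and `ℂⁿ`. -/
def IsIrreducibleRep {n : ℕ} {Γ : Type*} [Group Γ]
    (ρ : Γ →* Matrix.SpecialLinearGroup (Fin n) ℂ) : Prop :=
  ∀ W : Submodule ℂ (Fin n → ℂ),
    (∀ g : Γ, ∀ x ∈ W, (ρ g : Matrix (Fin n) (Fin n) ℂ).mulVec x ∈ W) → W = ⊥ ∨ W = ⊤

/-- The matrix `I_{p,q}`, diagonal with `p` entries `1` followed by `q` entries `-1`. -/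
def Ipq (n p : ℕ) : Matrix (Fin n) (Fin n) ℂ :=
  Matrix.diagonal (fun i => if (i : ℕ) < p then 1 else -1)

/-!
Write `σ(g) = ρ(g⁻¹)ᴴ`; the trace hypothesis says that `σ` and `ρ` have the same character.
By Burnside's theorem the `ρ(g)`, and hence the `σ(g)`, span all matrices. Nondegeneracy of the
trace form then shows that `ρ(a) ↦ σ(a)` (for `a` in the group algebra) is a well-defined algebra
endomorphism `φ` of `Mₙ(ℂ)`, and the Skolem–Noether construction gives `S ≠ 0` with
`S X = φ(X) S`, i.e. `ρ(g)ᴴ S ρ(g) = S`: a nonzero `ρ`-invariant sesquilinear form. The invariant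
forms are stable under `ᴴ`, so there is a nonzero Hermitian one `H`; its kernel is `ρ`-invariant,
so `H` is nondegenerate, and Sylvester's law of inertia writes `H = Pᴴ I_{p,q} P`. Conjugating
`ρ` by `P` lands in `SU(p,q)`.
-/

-- Burnside's theorem, deduced from the Jacobson density theorem.
theorem Subalgebra.eq_top_of_forall_invariant {k V : Type*} [Field k] [IsAlgClosed k]
    [AddCommGroup V] [Module k V] [FiniteDimensional k V] [Nontrivial V]
    (A : Subalgebra k (Module.End k V))
    (hA : ∀ W : Submodule k V, (∀ a ∈ A, ∀ v ∈ W, a v ∈ W) → W = ⊥ ∨ W = ⊤) : A = ⊤ := by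
  have : IsSimpleModule A V := by
    refine (isSimpleModule_iff _ _).mpr ⟨fun N => ?_⟩
    have := hA (N.restrictScalars k) fun a ha v hv => N.smul_mem ⟨a, ha⟩ hv
    simpa [Submodule.restrictScalars_eq_bot_iff, Submodule.restrictScalars_eq_top_iff] using this
  have : Module.Finite (Module.End A V) V := .of_restrictScalars_finite k _ _
  rw [eq_top_iff]
  intro T _
  -- By Schur, every `A`-linear endomorphism is a scalar, so `T` commutes with all of them.
  let T' : Module.End (Module.End A V) V :=
    { toFun := T
      map_add' := T.map_add
      map_smul' := fun f v => by
        obtain ⟨c, rfl⟩ := (IsSimpleModule.algebraMap_end_bijective_of_isAlgClosed k (A := A)).2 f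
        simp }
  obtain ⟨a, ha⟩ := Module.Finite.toModuleEnd_moduleEnd_surjective T'
  convert a.2
  ext v
  exact (LinearMap.congr_fun ha v).symm

theorem MonoidAlgebra.toSubmodule_range_lift {k G A : Type*} [CommSemiring k] [Monoid G]
    [Semiring A] [Algebra k A] (F : G →* A) :
    Subalgebra.toSubmodule (lift k A G F).range = Submodule.span k (Set.range F) := by
  apply le_antisymm
  · rintro _ ⟨x, rfl⟩
    induction x using MonoidAlgebra.induction_on with
    | of m => exact Submodule.subset_span ⟨m, by simp⟩
    | add x y hx hy => simpa using Submodule.add_mem _ hx hy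
    | smul r x hx => simpa using Submodule.smul_mem _ r hx
  · rw [Submodule.span_le]
    rintro _ ⟨m, rfl⟩
    exact ⟨of k G m, by simp⟩

theorem MonoidAlgebra.lift_surjective_iff {k G A : Type*} [CommSemiring k] [Monoid G]
    [Semiring A] [Algebra k A] (F : G →* A) :
    Function.Surjective (lift k A G F) ↔ Submodule.span k (Set.range F) = ⊤ := by
  rw [← toSubmodule_range_lift, ← AlgHom.range_eq_top, Algebra.toSubmodule_eq_top]

theorem AlgHom.exists_comp_eq_of_ker_le {R A B C : Type*} [CommSemiring R] [Ring A] [Ring B]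
    [Semiring C] [Algebra R A] [Algebra R B] [Algebra R C] (f : A →ₐ[R] B)
    (hf : Function.Surjective f) (g : A →ₐ[R] C) (h : RingHom.ker f ≤ RingHom.ker g) :
    ∃ φ : B →ₐ[R] C, φ.comp f = g :=
  ⟨(Ideal.Quotient.liftₐ _ g h).comp (Ideal.quotientKerAlgEquivOfSurjective hf).symm.toAlgHom,
    AlgHom.ext fun a => by
      simp only [AlgHom.coe_comp, AlgEquiv.coe_toAlgHom, Function.comp_apply,
        Ideal.quotientKerAlgEquivOfSurjective_symm_apply]
      rfl⟩

namespace Matrix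

variable {K n : Type*} [CommRing K] [Fintype n] [DecidableEq n]

theorem ker_le_ker_of_trace_eq {A : Type*} [Ring A] [Algebra K A]
    (f g : A →ₐ[K] Matrix n n K) (hg : Function.Surjective g)
    (htr : ∀ a, trace (f a) = trace (g a)) : RingHom.ker f ≤ RingHom.ker g := by
  intro a ha
  rw [RingHom.mem_ker] at ha ⊢
  rw [ext_iff_trace_mul_left]
  intro X
  obtain ⟨b, rfl⟩ := hg X
  rw [← map_mul, ← htr, map_mul, ha]
  simp

lemma single_mul_single (i j k l : n) (a b : K) :
    single i j a * single k l b = if j = k then single i l (a * b) else 0 := by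
  split_ifs with h
  · subst h; exact single_mul_single_same ..
  · exact single_mul_single_of_ne _ _ _ _ h _

/-- The intertwiner of the standard proof of the Skolem–Noether theorem for `Matrix n n K`. -/
def twist (φ : Matrix n n K →ₐ[K] Matrix n n K) (B : Matrix n n K) : Matrix n n K :=
  ∑ i, ∑ j, φ (single i j 1) * B * single j i 1

lemma twist_mul_single (φ : Matrix n n K →ₐ[K] Matrix n n K) (B : Matrix n n K) (k l : n)
    (c : K) : twist φ B * single k l c = ∑ j, φ (single k j 1) * B * single j l c := by
  simp [twist, Finset.sum_mul, mul_assoc, single_mul_single]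

lemma single_mul_twist (φ : Matrix n n K →ₐ[K] Matrix n n K) (B : Matrix n n K) (k l : n)
    (c : K) : φ (single k l c) * twist φ B = ∑ j, φ (single k j c) * B * single j l 1 := by
  simp only [twist, Finset.mul_sum, ← mul_assoc, ← map_mul, single_mul_single, mul_one]
  rw [Finset.sum_comm]
  simp [apply_ite φ, ite_mul]

lemma twist_mul (φ : Matrix n n K →ₐ[K] Matrix n n K) (B X : Matrix n n K) :
    twist φ B * X = φ X * twist φ B := by
  induction X using Matrix.induction_on' with
  | h_zero => simp
  | h_add X Y hX hY => simp [mul_add, add_mul, hX, hY]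
  | h_std_basis k l c =>
    rw [twist_mul_single, single_mul_twist]
    refine Finset.sum_congr rfl fun j _ => ?_
    have (i j : n) : single i j c = c • single i j 1 := by rw [smul_single, smul_eq_mul, mul_one]
    rw [this k j, this j l, map_smul, Matrix.mul_smul, Matrix.smul_mul, Matrix.smul_mul]

lemma exists_twist_ne_zero [Nonempty n] [Nontrivial K] (φ : Matrix n n K →ₐ[K] Matrix n n K) :
    ∃ B, twist φ B ≠ 0 := by
  by_contra! h
  have hφ : ∀ k l, φ (single k l 1) = 0 := fun k l => by
    have : ∀ a, φ (single k l 1) * single a a 1 = 0 := fun a => by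
      have := twist_mul_single φ (single a l 1) k a 1
      simpa [h, mul_assoc, single_mul_single] using this.symm
    rw [← mul_one (φ _), ← sum_single_one, Finset.mul_sum]
    exact Finset.sum_eq_zero fun a _ => this a
  apply one_ne_zero (α := Matrix n n K)
  rw [← map_one φ, ← sum_single_one, map_sum]
  exact Finset.sum_eq_zero fun a _ => hφ a a

theorem exists_ne_zero_mul_eq_mul_of_trace_eq {M : Type*} [Monoid M] [Nonempty n] [Nontrivial K]
    (ρ σ : M →* Matrix n n K) (hρ : Submodule.span K (Set.range ρ) = ⊤)
    (hσ : Submodule.span K (Set.range σ) = ⊤) (htr : ∀ g, trace (ρ g) = trace (σ g)) :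
    ∃ S ≠ 0, ∀ g, S * ρ g = σ g * S := by
  set f := MonoidAlgebra.lift K (Matrix n n K) M ρ
  set g := MonoidAlgebra.lift K (Matrix n n K) M σ
  have htr' : ∀ a, trace (f a) = trace (g a) := fun a => by
    induction a using MonoidAlgebra.induction_on with
    | of m => simpa [f, g] using htr m
    | add x y hx hy => simp [hx, hy]
    | smul r x hx => simp [hx]
  obtain ⟨φ, hφ⟩ := AlgHom.exists_comp_eq_of_ker_le f
    ((MonoidAlgebra.lift_surjective_iff ρ).mpr hρ) g
    (ker_le_ker_of_trace_eq f g ((MonoidAlgebra.lift_surjective_iff σ).mpr hσ) htr')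
  obtain ⟨B, hB⟩ := exists_twist_ne_zero φ
  refine ⟨twist φ B, hB, fun m => ?_⟩
  rw [twist_mul]
  congr 1
  simpa [f, g] using congr($hφ (MonoidAlgebra.of K M m))

section Forms

variable {G : Type*} [Group G] [StarRing K]

def conjDual (ρ : G →* Matrix n n K) : G →* Matrix n n K where
  toFun g := (ρ g⁻¹)ᴴ
  map_one' := by simp
  map_mul' g h := by simp [conjTranspose_mul]

lemma span_range_conjDual (ρ : G →* Matrix n n K)
    (hρ : Submodule.span K (Set.range ρ) = ⊤) :
    Submodule.span K (Set.range (conjDual ρ)) = ⊤ := by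
  have hrange : Set.range (conjDual ρ) = conjTranspose '' Set.range ρ := by
    ext X
    simp only [Set.mem_range, Set.mem_image, exists_exists_eq_and]
    exact ⟨fun ⟨g, hg⟩ => ⟨g⁻¹, hg⟩, fun ⟨g, hg⟩ => ⟨g⁻¹, by simpa [conjDual] using hg⟩⟩
  have := Submodule.map_span (conjTransposeLinearEquiv n n K K).toLinearMap (Set.range ρ)
  rw [hρ, Submodule.map_top] at this
  simpa [hrange] using this.symm

-- Matrices `H` of the `ρ`-invariant sesquilinear forms `(x, y) ↦ xᴴ H y`.
def invariantForms (ρ : G →* Matrix n n K) : Submodule K (Matrix n n K) where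
  carrier := {H | ∀ g, (ρ g)ᴴ * H * ρ g = H}
  add_mem' hH hH' g := by simp [Matrix.mul_add, Matrix.add_mul, hH g, hH' g]
  zero_mem' g := by simp
  smul_mem' c H hH g := by simp [hH g]

lemma mem_invariantForms_iff_mul_eq {ρ : G →* Matrix n n K} {H : Matrix n n K} :
    H ∈ invariantForms ρ ↔ ∀ g, H * ρ g = conjDual ρ g * H := by
  have hinv (g : G) : conjDual ρ g * (ρ g)ᴴ = 1 := by
    simp [conjDual, ← conjTranspose_mul, ← map_mul]
  have hinv' (g : G) : (ρ g)ᴴ * conjDual ρ g = 1 := by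
    simp [conjDual, ← conjTranspose_mul, ← map_mul]
  refine forall_congr' fun g => ⟨fun h => ?_, fun h => ?_⟩
  · nth_rw 2 [← h]
    rw [← Matrix.mul_assoc, ← Matrix.mul_assoc, hinv, Matrix.one_mul]
  · rw [Matrix.mul_assoc, h, ← Matrix.mul_assoc, hinv', Matrix.one_mul]

lemma conjTranspose_mem_invariantForms {ρ : G →* Matrix n n K} {H : Matrix n n K}
    (hH : H ∈ invariantForms ρ) : Hᴴ ∈ invariantForms ρ := fun g => by
  simpa [conjTranspose_mul, Matrix.mul_assoc] using congr(($(hH g))ᴴ)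

/-- The forms `H + Hᴴ` and `i (H - Hᴴ)` are Hermitian and not both zero. -/
lemma exists_isHermitian_ne_zero_mem_invariantForms {ρ : G →* Matrix n n ℂ} {H : Matrix n n ℂ}
    (hH : H ∈ invariantForms ρ) (h0 : H ≠ 0) :
    ∃ H' ∈ invariantForms ρ, H'.IsHermitian ∧ H' ≠ 0 := by
  have hH' := conjTranspose_mem_invariantForms hH
  by_cases hsum : H + Hᴴ = 0
  · refine ⟨Complex.I • (H - Hᴴ), Submodule.smul_mem _ _ (Submodule.sub_mem _ hH hH'), ?_, ?_⟩
    · rw [IsHermitian, conjTranspose_smul, conjTranspose_sub, conjTranspose_conjTranspose,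
        Complex.star_def, Complex.conj_I, neg_smul, ← smul_neg, neg_sub]
    · rw [Ne, smul_eq_zero, sub_eq_zero, not_or]
      refine ⟨Complex.I_ne_zero, fun h => h0 ?_⟩
      rw [← h, ← two_smul ℂ H] at hsum
      simpa using hsum
  · exact ⟨H + Hᴴ, Submodule.add_mem _ hH hH', by simp [IsHermitian, add_comm], hsum⟩

end Forms

end Matrix

theorem Fin.exists_perm_val_lt_card_iff {n : ℕ} (P : Fin n → Prop) [DecidablePred P] :
    ∃ e : Equiv.Perm (Fin n), ∀ i, (e i : ℕ) < Fintype.card {i // P i} ↔ P i := by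
  set p := Fintype.card {i // P i}
  have hp : p ≤ n := (Fintype.card_subtype_le P).trans_eq (Fintype.card_fin n)
  have h₁ : Fintype.card {i // P i} = Fintype.card {j : Fin n // (j : ℕ) < p} :=
    (Fintype.card_fin_lt_of_le hp).symm
  have h₂ : Fintype.card {i // ¬P i} = Fintype.card {j : Fin n // ¬(j : ℕ) < p} := by
    rw [Fintype.card_subtype_compl, Fintype.card_subtype_compl, h₁]
  refine ⟨Equiv.subtypeCongr (Fintype.equivOfCardEq h₁) (Fintype.equivOfCardEq h₂), fun i => ?_⟩
  by_cases hi : P i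
  · simpa [Equiv.subtypeCongr, hi] using ((Fintype.equivOfCardEq h₁) ⟨i, hi⟩).2
  · simpa [Equiv.subtypeCongr, hi] using ((Fintype.equivOfCardEq h₂) ⟨i, hi⟩).2

namespace Matrix

lemma conjTranspose_permMatrix_inv_mul_mul {n R : Type*} [Fintype n] [DecidableEq n]
    [CommRing R] [StarRing R] (e : Equiv.Perm n) (M : Matrix n n R) :
    ((e⁻¹).permMatrix R)ᴴ * M * (e⁻¹).permMatrix R = M.submatrix e e := by
  simp [PEquiv.toMatrix_toPEquiv_mul, PEquiv.mul_toMatrix_toPEquiv]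
  rfl

lemma diagonal_ofReal_eq_mul_diagonal_sign_mul {n : Type*} [Fintype n] [DecidableEq n]
    {d : n → ℝ} (hd : ∀ i, d i ≠ 0) :
    diagonal (fun i => (d i : ℂ)) =
      diagonal (fun i => (√|d i| : ℂ)) * diagonal (fun i => if 0 < d i then 1 else -1) *
        diagonal (fun i => (√|d i| : ℂ)) := by
  rw [diagonal_mul_diagonal, diagonal_mul_diagonal]
  congr 1
  funext i
  rw [mul_comm, ← mul_assoc, ← Complex.ofReal_mul, Real.mul_self_sqrt (abs_nonneg _)]
  rcases (hd i).lt_or_gt with h | h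
  · simp [h.not_gt, abs_of_neg h]
  · simp [h, abs_of_pos h]

lemma IsHermitian.eigenvalues_ne_zero_of_isUnit {n : Type*} [Fintype n] [DecidableEq n]
    {H : Matrix n n ℂ} (hH : H.IsHermitian) (hunit : IsUnit H) (i : n) :
    hH.eigenvalues i ≠ 0 := by
  have := (isUnit_iff_isUnit_det H).mp hunit
  rw [hH.det_eq_prod_eigenvalues, isUnit_iff_ne_zero, Finset.prod_ne_zero_iff] at this
  simpa using this i (Finset.mem_univ i)

theorem IsHermitian.exists_conjTranspose_mul_Ipq_mul_eq {n : ℕ} {H : Matrix (Fin n) (Fin n) ℂ}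
    (hH : H.IsHermitian) (hunit : IsUnit H) :
    ∃ p q : ℕ, p + q = n ∧ ∃ P : Matrix (Fin n) (Fin n) ℂ, IsUnit P ∧ Pᴴ * Ipq n p * P = H := by
  set d := hH.eigenvalues
  have hd : ∀ i, d i ≠ 0 := hH.eigenvalues_ne_zero_of_isUnit hunit
  obtain ⟨e, he⟩ := Fin.exists_perm_val_lt_card_iff (fun i => 0 < d i)
  set p := Fintype.card {i // 0 < d i}
  have hsign : (Ipq n p).submatrix e e = diagonal (fun i => if 0 < d i then 1 else -1) := by
    simp only [Ipq, submatrix_diagonal_equiv]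
    congr 1
    funext i
    simp only [Function.comp_apply, he]
  set W := diagonal (fun i => (√|d i| : ℂ))
  set U := (hH.eigenvectorUnitary : Matrix (Fin n) (Fin n) ℂ)
  have hW : Wᴴ = W := by simp [W, diagonal_conjTranspose]
  have hp : p ≤ n := (Fintype.card_subtype_le _).trans_eq (Fintype.card_fin n)
  refine ⟨p, n - p, Nat.add_sub_cancel' hp, (e⁻¹).permMatrix ℂ * W * star U, ?_, ?_⟩
  · refine ((IsUnit.mul ?_ ?_).mul ?_)
    · exact IsUnit.of_mul_eq_one (e.permMatrix ℂ) (by simp [← permMatrix_mul])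
    · exact isUnit_diagonal.mpr (Pi.isUnit_iff.mpr fun i => by simp [hd i])
    · exact Unitary.isUnit_coe (U := star hH.eigenvectorUnitary)
  · calc _ = U * W * (((e⁻¹).permMatrix ℂ)ᴴ * Ipq n p * (e⁻¹).permMatrix ℂ) * W * star U := by
          simp only [conjTranspose_mul, hW, star_eq_conjTranspose, conjTranspose_conjTranspose,
            Matrix.mul_assoc]
      _ = U * diagonal (fun i => (d i : ℂ)) * star U := by
          rw [conjTranspose_permMatrix_inv_mul_mul, hsign,
            diagonal_ofReal_eq_mul_diagonal_sign_mul hd]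
          simp only [W, Matrix.mul_assoc]
      _ = H := by
          rw [hH.spectral_theorem]
          rfl

end Matrix

section IrreducibleRep

open SpecialLinearGroup

variable {n : ℕ} {Γ : Type*} [Group Γ]

theorem IsIrreducibleRep.span_range_eq_top (hn : 0 < n)
    {ρ : Γ →* SpecialLinearGroup (Fin n) ℂ} (hirr : IsIrreducibleRep ρ) :
    Submodule.span ℂ (Set.range (coeMonoidHom.comp ρ)) = ⊤ := by
  have : Nontrivial (Fin n → ℂ) := have : NeZero n := ⟨hn.ne'⟩; inferInstance
  set F := MonoidAlgebra.lift ℂ (Matrix (Fin n) (Fin n) ℂ) Γ (coeMonoidHom.comp ρ)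
  have htop : F.range.map (toLinAlgEquiv' : Matrix (Fin n) (Fin n) ℂ ≃ₐ[ℂ] _).toAlgHom = ⊤ := by
    refine Subalgebra.eq_top_of_forall_invariant _ fun W hW => hirr W fun g x hx => ?_
    simpa [F] using hW _ ⟨F (MonoidAlgebra.of ℂ Γ g), ⟨_, rfl⟩, rfl⟩ x hx
  rw [← MonoidAlgebra.lift_surjective_iff]
  intro X
  obtain ⟨_, ⟨a, rfl⟩, ha⟩ := htop.ge (Algebra.mem_top (x := toLin' X))
  exact ⟨a, toLin'.injective ha⟩

theorem IsIrreducibleRep.isUnit_of_mem_invariantForms {ρ : Γ →* SpecialLinearGroup (Fin n) ℂ}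
    (hirr : IsIrreducibleRep ρ) {H : Matrix (Fin n) (Fin n) ℂ}
    (hH : H ∈ invariantForms (coeMonoidHom.comp ρ)) (h0 : H ≠ 0) : IsUnit H := by
  rw [← mulVec_injective_iff_isUnit, ← coe_mulVecLin, ← LinearMap.ker_eq_bot]
  refine (hirr _ fun g x hx => ?_).resolve_right fun htop => h0 ?_
  · have hg : H * (ρ g : Matrix (Fin n) (Fin n) ℂ) = conjDual _ g * H :=
      mem_invariantForms_iff_mul_eq.mp hH g
    rw [LinearMap.mem_ker, mulVecLin_apply] at hx ⊢
    rw [mulVec_mulVec, hg, ← mulVec_mulVec, hx, mulVec_zero]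
  · ext i j
    have hj : Pi.single j 1 ∈ LinearMap.ker H.mulVecLin := htop ▸ Submodule.mem_top
    simpa using congr_fun hj i

end IrreducibleRep

theorem Matrix.conjTranspose_conj_mul_mul_conj {n : Type*} [Fintype n] [DecidableEq n]
    {P J H R : Matrix n n ℂ} (hP : IsUnit P) (hPJ : Pᴴ * J * P = H) (hR : Rᴴ * H * R = H) :
    (P * R * P⁻¹)ᴴ * J * (P * R * P⁻¹) = J := by
  have hP' : P * P⁻¹ = 1 := mul_nonsing_inv P ((isUnit_iff_isUnit_det P).mp hP)
  calc _ = P⁻¹ᴴ * (Rᴴ * (Pᴴ * J * P) * R) * P⁻¹ := by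
          simp only [conjTranspose_mul, Matrix.mul_assoc]
    _ = (P * P⁻¹)ᴴ * J * (P * P⁻¹) := by
          rw [hPJ, hR, ← hPJ, conjTranspose_mul]
          simp only [Matrix.mul_assoc]
    _ = J := by rw [hP', conjTranspose_one, Matrix.one_mul, Matrix.mul_one]

/-- An irreducible representation whose character is fixed by `Φ₂` is conjugate to a
representation taking values in some `SU(p,q)`. -/
theorem irreducible_fixed_by_Phi2_conjugate_into_SUpq
    (n : ℕ) (hn : 0 < n) (Γ : Type*) [Group Γ]
    (ρ : Γ →* Matrix.SpecialLinearGroup (Fin n) ℂ)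
    (hirr : IsIrreducibleRep ρ)
    (htr : ∀ g : Γ, (ρ g : Matrix (Fin n) (Fin n) ℂ).trace =
      starRingEnd ℂ ((ρ g⁻¹ : Matrix.SpecialLinearGroup (Fin n) ℂ) :
        Matrix (Fin n) (Fin n) ℂ).trace) :
    ∃ (p q : ℕ), p + q = n ∧ ∃ Q : GL (Fin n) ℂ,
      ∀ g : Γ,
        ((Q : Matrix (Fin n) (Fin n) ℂ) * (ρ g : Matrix (Fin n) (Fin n) ℂ) *
            ((Q⁻¹ : GL (Fin n) ℂ) : Matrix (Fin n) (Fin n) ℂ))ᴴ * Ipq n p *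
          ((Q : Matrix (Fin n) (Fin n) ℂ) * (ρ g : Matrix (Fin n) (Fin n) ℂ) *
            ((Q⁻¹ : GL (Fin n) ℂ) : Matrix (Fin n) (Fin n) ℂ)) = Ipq n p := by
  have : Nonempty (Fin n) := ⟨⟨0, hn⟩⟩
  set ρ' := SpecialLinearGroup.coeMonoidHom.comp ρ
  have hspan := hirr.span_range_eq_top hn
  obtain ⟨S, hS0, hS⟩ := exists_ne_zero_mul_eq_mul_of_trace_eq ρ' (conjDual ρ') hspan
    (span_range_conjDual ρ' hspan) fun g => by simp [ρ', conjDual, htr g, trace_conjTranspose]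
  obtain ⟨H, hH, hherm, hH0⟩ :=
    exists_isHermitian_ne_zero_mem_invariantForms (mem_invariantForms_iff_mul_eq.mpr hS) hS0
  obtain ⟨p, q, hpq, P, hP, hPH⟩ :=
    hherm.exists_conjTranspose_mul_Ipq_mul_eq (hirr.isUnit_of_mem_invariantForms hH hH0)
  refine ⟨p, q, hpq, hP.unit, fun g => ?_⟩
  rw [Matrix.coe_units_inv, hP.unit_spec]
  exact conjTranspose_conj_mul_mul_conj hP hPH (hH g)
end

section
/- Let m be a positive integer and P ∈ SL_{2m}(ℂ) be such that conj(P) P = −Id. Then there exists Q ∈ GL_{2m}(ℂ) such that P = conj(Q) J_{2m} Q⁻¹. -/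
/-!
For any matrix `M`, the matrix `Q = M - conj(P) conj(M) J` satisfies `conj(Q) J = P Q`: it is
`M` plus its image under the antilinear involution `X ↦ P⁻¹ conj(X) J` (note `P⁻¹ = -conj(P)`).
Taking `M = (1 + t i) • 1` with `t` real gives `Q = A + t B` for two fixed matrices `A`, `B`, and
`det (A + z B)` is a polynomial in `z` which is nonzero at `z = -i`, where `A - i B = 2`. So it
has finitely many roots, and some real `t` makes `Q` invertible; then `P = conj(Q) J Q⁻¹`.
-/

open Matrix

/-- The `2m × 2m` block matrix `[[0, I_m], [-I_m, 0]]`, indexed by `Fin (2 * m)`. -/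
def Jmat (m : ℕ) : Matrix (Fin (2 * m)) (Fin (2 * m)) ℂ :=
  Matrix.of fun i j => if (i : ℕ) + m = (j : ℕ) then 1 else if (j : ℕ) + m = (i : ℕ) then -1 else 0

lemma Jmat_map_conj (m : ℕ) : (Jmat m).map (starRingEnd ℂ) = Jmat m := by
  ext i j
  simp only [Jmat, map_apply, of_apply]
  split_ifs <;> simp

lemma Jmat_mul_self (m : ℕ) : Jmat m * Jmat m = -1 := by
  ext i j
  have := i.isLt
  have := j.isLt
  rw [mul_apply, Finset.sum_eq_single
    ⟨if (i : ℕ) < m then i + m else i - m, by split_ifs <;> omega⟩]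
  · simp only [Jmat, of_apply, Matrix.neg_apply, one_apply, Fin.ext_iff]
    split_ifs <;> simp_all <;> omega
  · intro k _ hk
    have := k.isLt
    rw [Fin.ne_iff_vne] at hk
    simp only [Jmat, of_apply]
    split_ifs at hk <;> split_ifs <;> simp_all <;> omega
  · simp

namespace Matrix

variable {n R : Type*} [Fintype n] [DecidableEq n]

theorem finite_setOf_det_add_smul_eq_zero [CommRing R] [IsDomain R] (A B : Matrix n n R)
    {z : R} (hz : (A + z • B).det ≠ 0) : {w : R | (A + w • B).det = 0}.Finite := by
  set p : Polynomial R :=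
    det (A.map Polynomial.C + (Polynomial.X : Polynomial R) • B.map Polynomial.C)
  have eval_p (w : R) : p.eval w = (A + w • B).det := by
    rw [← Polynomial.coe_evalRingHom, RingHom.map_det]
    congr 1
    ext i j
    simp only [RingHom.mapMatrix_apply, map_apply, add_apply, smul_apply,
      Polynomial.coe_evalRingHom, Polynomial.eval_add, Polynomial.eval_C, smul_eq_mul,
      Polynomial.eval_mul, Polynomial.eval_X]
  have hp : p ≠ 0 := fun h => hz (by rw [← eval_p, h, Polynomial.eval_zero])
  convert Polynomial.finite_setOfPred_isRoot hp using 2 with w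
  simp only [Polynomial.IsRoot.def, eval_p]

theorem map_starRingEnd_mul_eq_mul_of_eq_sub [CommRing R] [StarRing R] {P J Q : Matrix n n R}
    (hP : P.map (starRingEnd R) * P = -1) (hJ : J * J = -1) (hJs : J.map (starRingEnd R) = J)
    {M : Matrix n n R} (hQ : Q = M - P.map (starRingEnd R) * M.map (starRingEnd R) * J) :
    Q.map (starRingEnd R) * J = P * Q := by
  have hP' : P * P.map (starRingEnd R) = -1 := by
    rw [← neg_eq_iff_eq_neg, ← mul_neg, mul_eq_one_comm, neg_mul, hP, neg_neg]
  have map_map_conj (X : Matrix n n R) :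
      (starRingEnd R).mapMatrix ((starRingEnd R).mapMatrix X) = X := by
    ext; simp
  subst hQ
  simp only [← RingHom.mapMatrix_apply] at *
  simp only [map_sub, map_mul, map_map_conj, hJs, sub_mul, mul_sub, mul_assoc, hJ]
  rw [← mul_assoc P ((starRingEnd R).mapMatrix P), hP']
  simp only [mul_neg, mul_one, neg_mul, one_mul]
  abel

end Matrix

open Complex in
theorem exists_Q_of_conj_mul_self_eq_neg_one_general
    (m : ℕ) (P : Matrix (Fin (2 * m)) (Fin (2 * m)) ℂ)
    (h : P.map (starRingEnd ℂ) * P = -1) :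
    ∃ Q : GL (Fin (2 * m)) ℂ,
      P = ((Q : Matrix (Fin (2 * m)) (Fin (2 * m)) ℂ).map (starRingEnd ℂ)) * Jmat m *
        ((Q⁻¹ : GL (Fin (2 * m)) ℂ) : Matrix (Fin (2 * m)) (Fin (2 * m)) ℂ) := by
  set K := P.map (starRingEnd ℂ) * Jmat m
  have det_at_neg_I : (1 - K + (-I) • I • (1 + K)).det ≠ 0 := by
    rw [smul_smul, neg_mul, I_mul_I, neg_neg, one_smul, sub_add_add_cancel, ← two_smul ℂ,
      det_smul, det_one, mul_one]
    exact pow_ne_zero _ two_ne_zero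
  obtain ⟨_, ⟨t, rfl⟩, ht⟩ :=
    (Set.infinite_range_of_injective ofReal_injective).exists_notMem_finite
      (finite_setOf_det_add_smul_eq_zero _ _ det_at_neg_I)
  set M : Matrix (Fin (2 * m)) (Fin (2 * m)) ℂ := ((1 : ℂ) + t * I) • 1
  have hQ : 1 - K + (t : ℂ) • I • (1 + K) =
      M - P.map (starRingEnd ℂ) * M.map (starRingEnd ℂ) * Jmat m := by
    have hM : M.map (starRingEnd ℂ) = ((1 : ℂ) - t * I) • 1 := by
      ext i j
      by_cases hij : i = j <;> simp [M, one_apply, hij, sub_eq_add_neg]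
    rw [hM, mul_smul_comm, mul_one, smul_mul_assoc]
    module
  have hunit : IsUnit (1 - K + (t : ℂ) • I • (1 + K)) :=
    (isUnit_iff_isUnit_det _).mpr (isUnit_iff_ne_zero.mpr ht)
  refine ⟨hunit.unit, (Units.eq_mul_inv_iff_mul_eq _).mpr ?_⟩
  rw [hunit.unit_spec]
  exact (map_starRingEnd_mul_eq_mul_of_eq_sub h (Jmat_mul_self m) (Jmat_map_conj m) hQ).symm

/-- If `P ∈ SL_{2m}(ℂ)` satisfies `conj(P) P = -Id`, then `P = conj(Q) J_{2m} Q⁻¹` for some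
`Q ∈ GL_{2m}(ℂ)`. -/
theorem exists_Q_of_conj_mul_self_eq_neg_one
    (m : ℕ) (hm : 0 < m) (P : Matrix (Fin (2 * m)) (Fin (2 * m)) ℂ) (hP : P.det = 1)
    (h : P.map (starRingEnd ℂ) * P = -1) :
    ∃ Q : GL (Fin (2 * m)) ℂ,
      P = ((Q : Matrix (Fin (2 * m)) (Fin (2 * m)) ℂ).map (starRingEnd ℂ)) * Jmat m *
        ((Q⁻¹ : GL (Fin (2 * m)) ℂ) : Matrix (Fin (2 * m)) (Fin (2 * m)) ℂ) :=
  exists_Q_of_conj_mul_self_eq_neg_one_general m P h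
end

section
/- For every triple (x, y, z) ∈ ℂ³ there exist matrices S, T ∈ SL_2(ℂ) with tr(S) = x, tr(T) = y and tr(ST) = z; that is, the map from pairs of SL_2(ℂ) matrices to ℂ³ given by the traces of S, T and ST is surjective. -/
/-!
Take `S` to be the companion matrix `!![x, -1; 1, 0]` and `T = !![y, u; -u⁻¹, 0]` for a unit `u`:
then `tr (S * T) = x * y + (u + u⁻¹)`, and `u + u⁻¹` takes every value in an algebraically closed
field, since `u ^ 2 - w * u + 1` always has a root, necessarily nonzero.
-/

open Matrix Polynomial

theorem IsAlgClosed.exists_add_inv_eq {K : Type*} [Field K] [IsAlgClosed K] (w : K) :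
    ∃ u : Kˣ, (u + u⁻¹ : K) = w := by
  have hdeg : (X ^ 2 - C w * X + 1 : K[X]).degree = 2 := by compute_degree!
  obtain ⟨u, hroot⟩ := IsAlgClosed.exists_root (X ^ 2 - C w * X + 1 : K[X]) (by simp [hdeg])
  have hu : u ^ 2 - w * u + 1 = 0 := by simpa using hroot
  have hu₀ : u ≠ 0 := by rintro rfl; simp at hu
  refine ⟨Units.mk0 u hu₀, ?_⟩
  simp only [Units.val_inv_eq_inv_val, Units.val_mk0]
  field_simp
  linear_combination hu

theorem Matrix.SpecialLinearGroup.exists_trace_eq_trace_eq_trace_mul_eq_of_unit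
    {R : Type*} [CommRing R] (x y : R) (u : Rˣ) :
    ∃ S T : SpecialLinearGroup (Fin 2) R,
      (S : Matrix (Fin 2) (Fin 2) R).trace = x ∧
      (T : Matrix (Fin 2) (Fin 2) R).trace = y ∧
      ((S * T : SpecialLinearGroup (Fin 2) R) : Matrix (Fin 2) (Fin 2) R).trace =
        x * y + (u + ↑u⁻¹) := by
  refine ⟨⟨!![x, -1; 1, 0], by simp [det_fin_two_of]⟩,
    ⟨!![y, ↑u; -↑u⁻¹, 0], by simp [det_fin_two_of]⟩, by simp [trace_fin_two_of],
    by simp [trace_fin_two_of], ?_⟩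
  show (!![x, -1; 1, 0] * !![y, (u : R); -↑u⁻¹, 0]).trace = _
  rw [mul_fin_two, trace_fin_two_of]
  ring

/-- The surjectivity part of the Fricke–Klein–Vogt theorem: every triple of complex numbers
is realized as `(tr S, tr T, tr (ST))` for some `S, T ∈ SL_2(ℂ)`. -/
theorem fricke_klein_vogt_surjective (x y z : ℂ) :
    ∃ S T : Matrix.SpecialLinearGroup (Fin 2) ℂ,
      (S : Matrix (Fin 2) (Fin 2) ℂ).trace = x ∧
      (T : Matrix (Fin 2) (Fin 2) ℂ).trace = y ∧
      ((S * T : Matrix.SpecialLinearGroup (Fin 2) ℂ) : Matrix (Fin 2) (Fin 2) ℂ).trace = z := by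
  obtain ⟨u, hu⟩ := IsAlgClosed.exists_add_inv_eq (z - x * y)
  obtain ⟨S, T, hS, hT, hST⟩ :=
    SpecialLinearGroup.exists_trace_eq_trace_eq_trace_mul_eq_of_unit x y u
  exact ⟨S, T, hS, hT, by rw [hST, hu]; ring⟩
end
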